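/- Let ω = exp(2πi/3), let α ∈ ℂ, and set x = h_0(α), x* = h_0(−α). For every z ∈ ℂ satisfying |z · exp(ω^k · α)| < 1 for each k ∈ {0, 1, 2}, the ordinary generating function of the main-stream Tchebycheff 3-polynomials converges and Σ_{n≥0} h_0(n·α) · z^n = (1 − 2·x·z + x*·z²) / (1 − 3·x·z + 3·x*·z² − z³). -/

import Mathlib

open Complex Finset

/-- `ω = exp(2πi/3)`, the primitive cube root of unity. -/
noncomputable def om3 : ℂ := Complex.exp (2 * Real.pi * Complex.I / 3)

/-- The third-order hyperbolic function
`h_k(z) = (1/3) · Σ_{s=0}^{2} ω^{−k·s} · exp(ω^s · z)`. -/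
noncomputable def hfun3 (k : ℕ) (z : ℂ) : ℂ :=
  (1 / (3 : ℂ)) * ∑ s ∈ Finset.range 3, om3 ^ (-((k * s : ℕ) : ℤ)) * Complex.exp (om3 ^ s * z)

/-!
Write `e_k = exp(ωᵏ α)`. Then `h_0(nα) zⁿ = ((z e_0)ⁿ + (z e_1)ⁿ + (z e_2)ⁿ) / 3`, so the series is
a third of the sum of three geometric series. Since `1 + ω + ω² = 0` we have `e_0 e_1 e_2 = 1`, so
`3x = e_0 + e_1 + e_2` and `3x* = e_0⁻¹ + e_1⁻¹ + e_2⁻¹ = e_1 e_2 + e_0 e_2 + e_0 e_1` are the first two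
elementary symmetric functions of the `e_k`, and the denominator `1 − 3xz + 3x*z² − z³` is
`(1 − z e_0)(1 − z e_1)(1 − z e_2)`.
-/

theorem sum_inv_one_sub_mul_of_mul_mul_eq_one {K : Type*} [Field K] {a b c z : K}
    (habc : a * b * c = 1) (ha : z * a ≠ 1) (hb : z * b ≠ 1) (hc : z * c ≠ 1) :
    (1 - z * a)⁻¹ + (1 - z * b)⁻¹ + (1 - z * c)⁻¹ =
      (3 - 2 * (a + b + c) * z + (a⁻¹ + b⁻¹ + c⁻¹) * z ^ 2) /
        (1 - (a + b + c) * z + (a⁻¹ + b⁻¹ + c⁻¹) * z ^ 2 - z ^ 3) := by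
  have ha' : a⁻¹ = b * c := inv_eq_of_mul_eq_one_right (by linear_combination habc)
  have hb' : b⁻¹ = a * c := inv_eq_of_mul_eq_one_right (by linear_combination habc)
  have hc' : c⁻¹ = a * b := inv_eq_of_mul_eq_one_right (by linear_combination habc)
  have hden : 1 - (a + b + c) * z + (a⁻¹ + b⁻¹ + c⁻¹) * z ^ 2 - z ^ 3 =
      (1 - z * a) * (1 - z * b) * (1 - z * c) := by
    rw [ha', hb', hc']
    linear_combination z ^ 3 * habc
  rw [hden, ha', hb', hc']
  field_simp [sub_ne_zero.2 ha.symm, sub_ne_zero.2 hb.symm, sub_ne_zero.2 hc.symm]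
  ring

theorem one_add_om3_add_om3_sq : 1 + om3 + om3 ^ 2 = 0 := by
  have h := (Complex.isPrimitiveRoot_exp 3 (by norm_num)).geom_sum_eq_zero (by norm_num)
  simpa [sum_range_succ, om3] using h

theorem hfun3_zero_eq (w : ℂ) :
    hfun3 0 w = (exp w + exp (om3 * w) + exp (om3 ^ 2 * w)) / 3 := by
  simp only [hfun3, one_div, zero_mul, CharP.cast_eq_zero, neg_zero, zpow_ofNat, pow_zero, one_mul,
    sum_range_succ, range_one, sum_singleton, pow_one]
  ring

theorem exp_mul_exp_om3_mul_mul_exp_om3_sq_mul (α : ℂ) :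
    exp α * exp (om3 * α) * exp (om3 ^ 2 * α) = 1 := by
  rw [← exp_add, ← exp_add, ← exp_zero]
  congr 1
  linear_combination α * one_add_om3_add_om3_sq

theorem hfun3_zero_nat_mul (n : ℕ) (α : ℂ) :
    hfun3 0 (n * α) = (exp α ^ n + exp (om3 * α) ^ n + exp (om3 ^ 2 * α) ^ n) / 3 := by
  simp only [hfun3_zero_eq, ← exp_nat_mul, mul_left_comm _ (n : ℂ)]

theorem hfun3_zero_neg (α : ℂ) :
    hfun3 0 (-α) = ((exp α)⁻¹ + (exp (om3 * α))⁻¹ + (exp (om3 ^ 2 * α))⁻¹) / 3 := by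
  simp only [hfun3_zero_eq, ← exp_neg, mul_neg]

/-- Ordinary generating function of the main-stream Tchebycheff 3-polynomials:
`Σ_{n≥0} h_0(nα)·zⁿ = (1 − 2xz + x*z²)/(1 − 3xz + 3x*z² − z³)`
with `x = h_0(α)`, `x* = h_0(−α)`. -/
theorem ogf_main_stream (α z : ℂ)
    (hz : ∀ k < 3, ‖z * Complex.exp (om3 ^ k * α)‖ < 1) :
    HasSum (fun n : ℕ => hfun3 0 ((n : ℂ) * α) * z ^ n)
      ((1 - 2 * hfun3 0 α * z + hfun3 0 (-α) * z ^ 2) /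
        (1 - 3 * hfun3 0 α * z + 3 * hfun3 0 (-α) * z ^ 2 - z ^ 3)) := by
  set a := exp α
  set b := exp (om3 * α)
  set c := exp (om3 ^ 2 * α)
  have ha : ‖z * a‖ < 1 := by simpa using hz 0 (by norm_num)
  have hb : ‖z * b‖ < 1 := by simpa using hz 1 (by norm_num)
  have hc : ‖z * c‖ < 1 := by simpa using hz 2 (by norm_num)
  have ne_one {w : ℂ} (hw : ‖w‖ < 1) : w ≠ 1 := fun h => hw.ne (by rw [h, norm_one])
  have geom := (((hasSum_geometric_of_norm_lt_one ha).add
    (hasSum_geometric_of_norm_lt_one hb)).add (hasSum_geometric_of_norm_lt_one hc)).div_const 3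
  have hval : (1 - 2 * hfun3 0 α * z + hfun3 0 (-α) * z ^ 2) /
      (1 - 3 * hfun3 0 α * z + 3 * hfun3 0 (-α) * z ^ 2 - z ^ 3) =
      ((1 - z * a)⁻¹ + (1 - z * b)⁻¹ + (1 - z * c)⁻¹) / 3 := by
    rw [sum_inv_one_sub_mul_of_mul_mul_eq_one (exp_mul_exp_om3_mul_mul_exp_om3_sq_mul α)
      (ne_one ha) (ne_one hb) (ne_one hc), hfun3_zero_eq, hfun3_zero_neg]
    ring
  rw [hval]
  exact geom.congr_fun fun n => by rw [hfun3_zero_nat_mul]; ring
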